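/- arXiv:1702.01903 — 5 statements merged into one kernel-verified Lean document; each statement's English description precedes it below -/
import Mathlib

section
/- Given any KL-function β, there exist a K-function α and an L-function φ such that β(s,t) ≤ α(s)·φ(t) for all s,t ≥ 0. -/
open Set Filter

/-- A K-function: continuous, zero at zero, strictly increasing on `[0, ∞)`. -/
def IsKFun (f : ℝ → ℝ) : Prop :=
  ContinuousOn f (Set.Ici 0) ∧ f 0 = 0 ∧ StrictMonoOn f (Set.Ici 0)

/-- An L-function: continuous, nonincreasing, tending to 0 at infinity. -/
def IsLFun (f : ℝ → ℝ) : Prop :=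
  ContinuousOn f (Set.Ici 0) ∧ AntitoneOn f (Set.Ici 0) ∧ Tendsto f atTop (nhds 0)

/-- A KL-function. -/
def IsKLFun (β : ℝ → ℝ → ℝ) : Prop :=
  (∀ t ≥ (0 : ℝ), IsKFun fun s => β s t) ∧ (∀ s ≥ (0 : ℝ), IsLFun fun t => β s t)

/-- Sontag's K·L bound: every KL-function is bounded above by a
product `α(s)·φ(t)` of a K-function and an L-function. -/
theorem klfun_le_kfun_mul_lfun (β : ℝ → ℝ → ℝ) (hβ : IsKLFun β) :
    ∃ α φ : ℝ → ℝ, IsKFun α ∧ IsLFun φ ∧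
      ∀ s ≥ (0 : ℝ), ∀ t ≥ (0 : ℝ), β s t ≤ α s * φ t := by
  classical
  obtain ⟨hK, hL⟩ := hβ
  have hb0 : ∀ t ≥ (0:ℝ), β 0 t = 0 := fun t ht => (hK t ht).2.1
  have hnn : ∀ s ≥ (0:ℝ), ∀ t ≥ (0:ℝ), 0 ≤ β s t := by
    intro s hs t ht
    have h := ((hK t ht).2.2).monotoneOn self_mem_Ici hs hs
    simpa [hb0 t ht] using h
  have hanti : ∀ s ≥ (0:ℝ), ∀ t ≥ (0:ℝ), β s t ≤ β s 0 := by
    intro s hs t ht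
    exact (hL s hs).2.1 self_mem_Ici ht ht
  -- choose times where β(n+1, ·) is small
  have hex : ∀ n : ℕ, ∃ u : ℝ, 0 ≤ u ∧ β ((n:ℝ)+1) u ≤ (1/4 : ℝ)^(n+2) := by
    intro n
    have ht : Tendsto (fun t => β ((n:ℝ)+1) t) atTop (nhds 0) :=
      (hL ((n:ℝ)+1) (by positivity)).2.2
    have h1 : ∀ᶠ u in atTop, β ((n:ℝ)+1) u ≤ (1/4:ℝ)^(n+2) :=
      ht.eventually (eventually_le_nhds (by positivity))
    obtain ⟨u, hu1, hu2⟩ := (h1.and (eventually_ge_atTop 0)).exists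
    exact ⟨u, hu2, hu1⟩
  choose g hg0 hg1 using hex
  set T : ℕ → ℝ := fun n => Nat.rec 0 (fun k Tk => max (Tk + 1) (g k)) n with hT
  have hT0 : T 0 = 0 := rfl
  have hTsucc : ∀ n, T (n+1) = max (T n + 1) (g n) := fun n => rfl
  have hTstep : ∀ n, T n + 1 ≤ T (n+1) := fun n => by
    rw [hTsucc]; exact le_max_left _ _
  have hTmono : Monotone T := monotone_nat_of_le_succ (fun n => by linarith [hTstep n])
  have hTge : ∀ n : ℕ, (n:ℝ) ≤ T n := by
    intro n
    induction n with
    | zero => simp [hT0]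
    | succ m ih => have := hTstep m; push_cast; linarith
  have hTnn : ∀ n, 0 ≤ T n := fun n => le_trans (n.cast_nonneg) (hTge n)
  -- key property of T
  have hP : ∀ n : ℕ, ∀ u, T n ≤ u → β (n:ℝ) u ≤ (1/4:ℝ)^(n+1) := by
    intro n u hu
    have hu0 : (0:ℝ) ≤ u := le_trans (hTnn n) hu
    cases n with
    | zero =>
      rw [Nat.cast_zero, hb0 u hu0]; positivity
    | succ m =>
      have hg_le : g m ≤ u := by
        have h1 : g m ≤ T (m+1) := by rw [hTsucc]; exact le_max_right _ _
        linarith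
      have h2 : β ((m:ℝ)+1) u ≤ β ((m:ℝ)+1) (g m) :=
        (hL ((m:ℝ)+1) (by positivity)).2.1 (hg0 m) hu0 hg_le
      have h3 := hg1 m
      calc β (↑(m+1):ℝ) u = β ((m:ℝ)+1) u := by push_cast; ring_nf
        _ ≤ (1/4:ℝ)^(m+2) := le_trans h2 h3
        _ = (1/4:ℝ)^((m+1)+1) := by ring_nf
  -- the L-function φ
  set F : ℕ → ℝ → ℝ := fun n t => (1/2:ℝ)^n * (1 - max 0 (min 1 (t - T n))) with hF
  have hF01 : ∀ n t, 0 ≤ max 0 (min 1 (t - T n)) ∧ max 0 (min 1 (t - T n)) ≤ 1 :=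
    fun n t => ⟨le_max_left _ _, max_le zero_le_one (min_le_left _ _)⟩
  have hFnn : ∀ n t, 0 ≤ F n t := by
    intro n t
    have := (hF01 n t).2
    have h2 : (0:ℝ) ≤ (1/2:ℝ)^n := by positivity
    rw [hF]; dsimp only; nlinarith
  have hFle : ∀ n t, F n t ≤ (1/2:ℝ)^n := by
    intro n t
    have := (hF01 n t).1
    have h2 : (0:ℝ) ≤ (1/2:ℝ)^n := by positivity
    rw [hF]; dsimp only; nlinarith
  have hgeo : Summable (fun n : ℕ => (1/2:ℝ)^n) :=
    summable_geometric_of_lt_one (by norm_num) (by norm_num)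
  have hsum : ∀ t, Summable (fun n => F n t) :=
    fun t => Summable.of_nonneg_of_le (fun n => hFnn n t) (fun n => hFle n t) hgeo
  set φ : ℝ → ℝ := fun t => ∑' n, F n t with hφ
  have hφnn : ∀ t, 0 ≤ φ t := fun t => tsum_nonneg (fun n => hFnn n t)
  -- φ continuous
  have hφcont : Continuous φ := by
    apply continuous_tsum (u := fun n : ℕ => (1/2:ℝ)^n)
    · intro n
      rw [hF]; dsimp only
      exact continuous_const.mul (continuous_const.sub
        (continuous_const.max (continuous_const.min ((continuous_id.sub continuous_const)))))
    · exact hgeo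
    · intro n t
      rw [Real.norm_eq_abs, abs_of_nonneg (hFnn n t)]
      exact hFle n t
  -- φ antitone
  have hφanti : Antitone φ := by
    intro a b hab
    apply Summable.tsum_le_tsum _ (hsum b) (hsum a)
    intro n
    rw [hF]; dsimp only
    have h1 : max 0 (min 1 (a - T n)) ≤ max 0 (min 1 (b - T n)) :=
      max_le_max le_rfl (min_le_min le_rfl (by linarith))
    have h2 : (0:ℝ) ≤ (1/2:ℝ)^n := by positivity
    nlinarith
  -- lower bound on φ
  have hφlow : ∀ (n : ℕ) (t : ℝ), t < T (n+1) → (1/2:ℝ)^(n+1) ≤ φ t := by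
    intro n t htn
    have h0 : F (n+1) t = (1/2:ℝ)^(n+1) := by
      have h1 : min 1 (t - T (n+1)) ≤ 0 := le_trans (min_le_right _ _) (by linarith)
      rw [hF]; dsimp only
      rw [max_eq_left h1]; ring
    calc (1/2:ℝ)^(n+1) = F (n+1) t := h0.symm
      _ ≤ φ t := Summable.le_tsum (hsum t) (n+1) (fun j _ => hFnn j t)
  -- upper bound on φ
  have hφup : ∀ (m : ℕ) (t : ℝ), T m ≤ t → φ t ≤ 2 * (1/2:ℝ)^m := by
    intro m t htm
    have hz : ∀ n < m, F n t = 0 := by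
      intro n hn
      have h1 : T (n+1) ≤ T m := hTmono hn
      have h2 : (1:ℝ) ≤ t - T n := by
        have := hTstep n; linarith
      rw [hF]; dsimp only
      rw [min_eq_left h2, max_eq_right zero_le_one]; ring
    have hkey := Summable.sum_add_tsum_nat_add (f := fun n => F n t) m (hsum t)
    have hz2 : ∑ i ∈ Finset.range m, F i t = 0 :=
      Finset.sum_eq_zero (fun i hi => hz i (Finset.mem_range.mp hi))
    have h3 : φ t = ∑' i, F (i + m) t := by
      rw [hφ]; dsimp only; rw [← hkey, hz2, zero_add]
    rw [h3]
    have h4 : ∑' (i : ℕ), F (i + m) t ≤ ∑' (i : ℕ), (1/2:ℝ)^(i+m) := by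
      apply Summable.tsum_le_tsum (fun i => hFle (i+m) t) ((hsum t).comp_injective (add_left_injective m))
      exact (summable_nat_add_iff m).mpr hgeo
    have h5 : ∀ i : ℕ, (1/2:ℝ)^(i+m) = (1/2:ℝ)^m * (1/2:ℝ)^i := by
      intro i; rw [pow_add]; ring
    have h6 : ∑' (i : ℕ), (1/2:ℝ)^(i+m) = 2 * (1/2:ℝ)^m := by
      rw [tsum_congr h5, tsum_mul_left,
        tsum_geometric_of_lt_one (by norm_num) (by norm_num : (1/2:ℝ) < 1)]
      norm_num; ring
    exact le_trans h4 (le_of_eq h6)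
  -- φ tends to 0
  have hφtend : Tendsto φ atTop (nhds 0) := by
    rw [Metric.tendsto_atTop]
    intro ε hε
    obtain ⟨m, hm⟩ := exists_pow_lt_of_lt_one (half_pos hε) (by norm_num : (1/2:ℝ) < 1)
    refine ⟨T m, fun t htm => ?_⟩
    rw [Real.dist_eq, sub_zero, abs_of_nonneg (hφnn t)]
    have := hφup m t htm
    linarith
  -- the K-function α
  set α : ℝ → ℝ := fun s => Real.sqrt (β s 0) * (1 + Real.sqrt (β s 0) * (2 * Real.exp s))
    with hα
  have hAcont : ContinuousOn (fun s => Real.sqrt (β s 0)) (Ici 0) :=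
    Real.continuous_sqrt.comp_continuousOn (hK 0 le_rfl).1
  have hαK : IsKFun α := by
    refine ⟨?_, ?_, ?_⟩
    · exact hAcont.mul (ContinuousOn.add continuousOn_const
        (hAcont.mul ((continuous_const.mul Real.continuous_exp).continuousOn)))
    · rw [hα]; dsimp only; rw [hb0 0 le_rfl, Real.sqrt_zero, zero_mul]
    · intro a ha b hb hab
      have hlt : Real.sqrt (β a 0) < Real.sqrt (β b 0) :=
        Real.sqrt_lt_sqrt (hnn a ha 0 le_rfl) ((hK 0 le_rfl).2.2 ha hb hab)
      have hle : Real.sqrt (β a 0) ≤ Real.sqrt (β b 0) := le_of_lt hlt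
      have hexp : Real.exp a ≤ Real.exp b := Real.exp_le_exp.mpr (le_of_lt hab)
      rw [hα]; dsimp only
      apply mul_lt_mul hlt _ (by positivity) (Real.sqrt_nonneg _)
      gcongr
  -- φ is an L-function
  have hφL : IsLFun φ := ⟨hφcont.continuousOn, hφanti.antitoneOn _, hφtend⟩
  refine ⟨α, φ, hαK, hφL, ?_⟩
  -- the main inequality
  intro s hs t ht
  have hex2 : ∃ m : ℕ, t < T m := by
    obtain ⟨m, hm⟩ := exists_nat_gt t
    exact ⟨m, lt_of_lt_of_le hm (hTge m)⟩
  set k := Nat.find hex2 with hk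
  have hk_spec : t < T k := Nat.find_spec hex2
  have hk_pos : 0 < k := by
    rcases Nat.eq_zero_or_pos k with h | h
    · exfalso; rw [h, hT0] at hk_spec; linarith
    · exact h
  obtain ⟨n, hkn⟩ : ∃ n, k = n + 1 := ⟨k - 1, (Nat.succ_pred_eq_of_pos hk_pos).symm⟩
  have hTn_le : T n ≤ t := by
    have := Nat.find_min hex2 (by omega : n < k)
    linarith [not_lt.mp this]
  have hTn1 : t < T (n+1) := by rw [← hkn]; exact hk_spec
  have hflow : (1/2:ℝ)^(n+1) ≤ φ t := hφlow n t hTn1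
  have hn0 : (0:ℝ) ≤ (n:ℝ) := n.cast_nonneg
  by_cases hsn : s ≤ (n:ℝ)
  · -- small s
    have h1 : β s t ≤ Real.sqrt (β s 0) * Real.sqrt (β (n:ℝ) t) := by
      have e : β s t = Real.sqrt (β s t) * Real.sqrt (β s t) :=
        (Real.mul_self_sqrt (hnn s hs t ht)).symm
      rw [e]
      exact mul_le_mul (Real.sqrt_le_sqrt (hanti s hs t ht))
        (Real.sqrt_le_sqrt (((hK t ht).2.2).monotoneOn hs hn0 hsn))
        (Real.sqrt_nonneg _) (Real.sqrt_nonneg _)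
    have h2 : Real.sqrt (β (n:ℝ) t) ≤ (1/2:ℝ)^(n+1) := by
      have hq : ((1/4:ℝ))^(n+1) = ((1/2:ℝ)^(n+1))^2 := by
        rw [← pow_mul, show (1/4:ℝ) = (1/2)^2 by norm_num, ← pow_mul]; ring_nf
      calc Real.sqrt (β (n:ℝ) t) ≤ Real.sqrt ((1/4:ℝ)^(n+1)) :=
            Real.sqrt_le_sqrt (hP n t hTn_le)
        _ = (1/2:ℝ)^(n+1) := by rw [hq, Real.sqrt_sq (by positivity)]
    have h3 : Real.sqrt (β s 0) ≤ α s := by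
      rw [hα]; dsimp only
      have h4 : 0 ≤ Real.sqrt (β s 0) * (2 * Real.exp s) := by positivity
      nlinarith [Real.sqrt_nonneg (β s 0)]
    calc β s t ≤ Real.sqrt (β s 0) * Real.sqrt (β (n:ℝ) t) := h1
      _ ≤ Real.sqrt (β s 0) * (1/2:ℝ)^(n+1) :=
          mul_le_mul_of_nonneg_left h2 (Real.sqrt_nonneg _)
      _ ≤ Real.sqrt (β s 0) * φ t :=
          mul_le_mul_of_nonneg_left hflow (Real.sqrt_nonneg _)
      _ ≤ α s * φ t := mul_le_mul_of_nonneg_right h3 (hφnn t)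
  · -- large s
    have hsn' : (n:ℝ) < s := not_le.mp hsn
    have h2e : (2:ℝ) ≤ Real.exp 1 := by
      have := Real.add_one_le_exp 1; linarith
    have hE : (2:ℝ)^n ≤ Real.exp s := by
      calc (2:ℝ)^n ≤ (Real.exp 1)^n := pow_le_pow_left₀ (by norm_num) h2e n
        _ = Real.exp n := by rw [← Real.exp_nat_mul]; norm_num
        _ ≤ Real.exp s := Real.exp_le_exp.mpr (le_of_lt hsn')
    have hb_le : β s t ≤ β s 0 := hanti s hs t ht
    have hA2 : Real.sqrt (β s 0) * Real.sqrt (β s 0) = β s 0 :=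
      Real.mul_self_sqrt (hnn s hs 0 le_rfl)
    have hpow : ((1/2:ℝ))^n * (2:ℝ)^n = 1 := by
      rw [← mul_pow]; norm_num
    set A := Real.sqrt (β s 0) with hA'
    have hA0 : 0 ≤ A := Real.sqrt_nonneg _
    calc β s t ≤ β s 0 := hb_le
      _ = (A * A) * (((1/2:ℝ))^n * (2:ℝ)^n) := by rw [hpow, hA2, mul_one]
      _ ≤ (A * A) * (((1/2:ℝ))^n * Real.exp s) := by
          apply mul_le_mul_of_nonneg_left _ (by positivity)
          exact mul_le_mul_of_nonneg_left hE (by positivity)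
      _ = (A * (A * (2 * Real.exp s))) * (1/2:ℝ)^(n+1) := by rw [pow_succ]; ring
      _ ≤ (A * (A * (2 * Real.exp s))) * φ t := by
          apply mul_le_mul_of_nonneg_left hflow (by positivity)
      _ ≤ α s * φ t := by
          apply mul_le_mul_of_nonneg_right _ (hφnn t)
          rw [hα]; dsimp only; rw [← hA']
          nlinarith [Real.exp_pos s]
end

section
/- Let β(s,t) = c₁·s^{a₁}·(t+1)^{-b₁} with c₁, a₁, b₁ > 0, and let ρ̲(s,t) = c₂·s^{a₂}·(t+1)^{-b₂} = ρ̄(s,t) with c₂, a₂, b₂ > 0. If a₂/b₂ ≥ a₁/b₁, then for every K-function π there exists a K-function π′ such that c₁·(3·(π(s)·(t+1)^{b₂}/c₂)^{1/a₂})^{a₁}·(t+1)^{-b₁} ≤ π′(s) for all s, t ≥ 0. -/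
open Set

/-!
Since `a₂/b₂ ≥ a₁/b₁`, the time factor `(t+1)^{b₂}` inside the root contributes
`(t+1)^{a₁ b₂ / a₂}`, which is dominated by the decay `(t+1)^{-b₁}`. Dropping the time
dependence altogether leaves `π' s = c₁ (3 (π s / c₂)^{1/a₂})^{a₁}`, a K-function because
K-functions are stable under positive scaling and positive powers.
-/

namespace IsKFun

variable {f : ℝ → ℝ}

theorem nonneg (hf : IsKFun f) {s : ℝ} (hs : 0 ≤ s) : 0 ≤ f s := by
  obtain ⟨-, hzero, hmono⟩ := hf
  rw [← hzero]
  exact hmono.monotoneOn self_mem_Ici hs hs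

theorem const_mul (hf : IsKFun f) {c : ℝ} (hc : 0 < c) : IsKFun fun s => c * f s :=
  ⟨continuousOn_const.mul hf.1, by simp [hf.2.1],
    fun _ hx _ hy hxy => mul_lt_mul_of_pos_left (hf.2.2 hx hy hxy) hc⟩

theorem div_const (hf : IsKFun f) {c : ℝ} (hc : 0 < c) : IsKFun fun s => f s / c := by
  simpa only [div_eq_inv_mul] using hf.const_mul (inv_pos.mpr hc)

theorem rpow_const (hf : IsKFun f) {p : ℝ} (hp : 0 < p) : IsKFun fun s => f s ^ p :=
  ⟨hf.1.rpow_const fun _ _ => Or.inr hp.le, by simp [hf.2.1, Real.zero_rpow hp.ne'],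
    fun _ hx _ hy hxy => Real.rpow_lt_rpow (hf.nonneg hx) (hf.2.2 hx hy hxy) hp⟩

end IsKFun

theorem Real.mul_mul_rpow_rpow_rpow {k u T : ℝ} (hk : 0 ≤ k) (hu : 0 ≤ u) (hT : 0 < T)
    (b p q : ℝ) : (k * (u * T ^ b) ^ p) ^ q = (k * u ^ p) ^ q * T ^ (b * p * q) := by
  rw [Real.mul_rpow hu (Real.rpow_nonneg hT.le _), ← Real.rpow_mul hT.le, ← mul_assoc,
    Real.mul_rpow (by positivity) (Real.rpow_nonneg hT.le _), ← Real.rpow_mul hT.le]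

theorem exponent_balance_nonpos {a₁ b₁ a₂ b₂ : ℝ} (hb₁ : 0 < b₁) (ha₂ : 0 < a₂)
    (hb₂ : 0 < b₂) (hab : a₁ / b₁ ≤ a₂ / b₂) : b₂ * (1 / a₂) * a₁ + -b₁ ≤ 0 := by
  rw [div_le_div_iff₀ hb₁ hb₂] at hab
  have : b₂ * (1 / a₂) * a₁ ≤ b₁ := by
    rw [mul_one_div, div_mul_eq_mul_div, div_le_iff₀ ha₂]
    linarith
  linarith

theorem rational_gain_le_of_exponent_balance {c₁ a₁ b₁ c₂ a₂ b₂ x t : ℝ} (hc₁ : 0 < c₁)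
    (hb₁ : 0 < b₁) (hc₂ : 0 < c₂) (ha₂ : 0 < a₂) (hb₂ : 0 < b₂)
    (hab : a₁ / b₁ ≤ a₂ / b₂) (hx : 0 ≤ x) (ht : 0 ≤ t) :
    c₁ * (3 * (x * (t + 1) ^ b₂ / c₂) ^ (1 / a₂)) ^ a₁ * (t + 1) ^ (-b₁)
      ≤ c₁ * (3 * (x / c₂) ^ (1 / a₂)) ^ a₁ := by
  have hT : (0 : ℝ) < t + 1 := by linarith
  rw [mul_div_right_comm, Real.mul_mul_rpow_rpow_rpow (by norm_num) (by positivity) hT,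
    mul_assoc, mul_assoc, ← Real.rpow_add hT]
  refine mul_le_mul_of_nonneg_left (mul_le_of_le_one_right (by positivity) ?_) hc₁.le
  exact Real.rpow_le_one_of_one_le_of_nonpos (by linarith)
    (exponent_balance_nonpos hb₁ ha₂ hb₂ hab)

/-- rational-form key stability condition. With
`β(s,t) = c₁ s^{a₁} (t+1)^{-b₁}` and `ρ̲(s,t) = ρ̄(s,t) = c₂ s^{a₂} (t+1)^{-b₂}`,
if `a₂/b₂ ≥ a₁/b₁` then for every K-function `π` there is a K-function `π'` with
`c₁ (3 (π(s)(t+1)^{b₂}/c₂)^{1/a₂})^{a₁} (t+1)^{-b₁} ≤ π'(s)` for all `s, t ≥ 0`. -/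
theorem rational_key_stability (c₁ a₁ b₁ c₂ a₂ b₂ : ℝ)
    (hc₁ : 0 < c₁) (ha₁ : 0 < a₁) (hb₁ : 0 < b₁)
    (hc₂ : 0 < c₂) (ha₂ : 0 < a₂) (hb₂ : 0 < b₂)
    (hab : a₁ / b₁ ≤ a₂ / b₂) (π : ℝ → ℝ) (hπ : IsKFun π) :
    ∃ π' : ℝ → ℝ, IsKFun π' ∧ ∀ s ≥ (0 : ℝ), ∀ t ≥ (0 : ℝ),
      c₁ * (3 * (π s * (t + 1) ^ b₂ / c₂) ^ (1 / a₂)) ^ a₁ * (t + 1) ^ (-b₁)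
        ≤ π' s :=
  ⟨fun s => c₁ * (3 * (π s / c₂) ^ (1 / a₂)) ^ a₁,
    (((hπ.div_const hc₂).rpow_const (by positivity)).const_mul three_pos).rpow_const ha₁
      |>.const_mul hc₁,
    fun _ hs _ ht => rational_gain_le_of_exponent_balance hc₁ hb₁ hc₂ ha₂ hb₂ hab
      (hπ.nonneg hs) ht⟩
end

section
/- Let β(s,t) = c₁·s^{a₁}·b₁^t with c₁, a₁ > 0 and 0 < b₁ < 1, and let ρ̲(s,t) = c₂·s^{a₂}·b₂^t with c₂, a₂ > 0 and 0 < b₂ < 1. If b₂^{1/a₂} ≥ b₁^{1/a₁}, then for every K-function π there exists a K-function π′ such that c₁·(3·(π(s)/(c₂·b₂^t))^{1/a₂})^{a₁}·b₁^t ≤ π′(s) for all s ≥ 0 and t ≥ 0. -/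
open Set

/-!
With `γ = a₁ / a₂`, the left-hand side factors as
`c₁ 3^{a₁} (π(s)/c₂)^γ · b₁^t / (b₂^t)^γ`. The hypothesis `b₁^{1/a₁} ≤ b₂^{1/a₂}`, raised to
the power `t a₁`, says exactly that `b₁^t ≤ (b₂^t)^γ`, so the time-dependent factor is at
most `1` and `π'(s) = c₁ 3^{a₁} (π(s)/c₂)^γ` works; it is a K-function as a positive multiple
of a positive power of the K-function `π / c₂`.
-/

namespace IsKFun

variable {f : ℝ → ℝ}

theorem rpow (hf : IsKFun f) {γ : ℝ} (hγ : 0 < γ) : IsKFun fun s => f s ^ γ := by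
  have hfnn := fun s (hs : s ∈ Ici (0 : ℝ)) => hf.nonneg hs
  obtain ⟨hfc, hf0, hfm⟩ := hf
  exact ⟨hfc.rpow_const fun _ _ => Or.inr hγ.le, by simp [hf0, Real.zero_rpow hγ.ne'],
    fun x hx y hy hxy => Real.rpow_lt_rpow (hfnn x hx) (hfm hx hy hxy) hγ⟩

end IsKFun

theorem rpow_le_rpow_rpow_of_rpow_inv_le {b₁ b₂ a₁ a₂ t : ℝ} (hb₁ : 0 ≤ b₁) (hb₂ : 0 ≤ b₂)
    (ha₁ : 0 < a₁) (ha₂ : 0 < a₂) (hab : b₁ ^ (1 / a₁) ≤ b₂ ^ (1 / a₂)) (ht : 0 ≤ t) :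
    b₁ ^ t ≤ (b₂ ^ t) ^ (a₁ / a₂) := by
  have h := Real.rpow_le_rpow (Real.rpow_nonneg hb₁ _) hab (mul_nonneg ht ha₁.le)
  rw [← Real.rpow_mul hb₁, ← Real.rpow_mul hb₂, show 1 / a₁ * (t * a₁) = t by field_simp,
    show 1 / a₂ * (t * a₁) = t * (a₁ / a₂) by field_simp] at h
  rwa [← Real.rpow_mul hb₂]

theorem mul_rpow_div_mul_rpow_eq {c₁ c₂ a₁ a₂ x y z : ℝ} (hc₂ : 0 < c₂) (hx : 0 ≤ x)
    (hy : 0 < y) :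
    c₁ * (3 * (x / (c₂ * y)) ^ (1 / a₂)) ^ a₁ * z
      = c₁ * 3 ^ a₁ * (x / c₂) ^ (a₁ / a₂) * (z / y ^ (a₁ / a₂)) := by
  have hxy : 0 ≤ x / (c₂ * y) := by positivity
  rw [Real.mul_rpow (by norm_num) (Real.rpow_nonneg hxy _), ← Real.rpow_mul hxy,
    show 1 / a₂ * a₁ = a₁ / a₂ by ring, ← div_div, Real.div_rpow (by positivity) hy.le]
  ring

theorem exponential_key_stability_general (c₁ a₁ b₁ c₂ a₂ b₂ : ℝ)
    (hc₁ : 0 < c₁) (ha₁ : 0 < a₁) (hb₁0 : 0 < b₁)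
    (hc₂ : 0 < c₂) (ha₂ : 0 < a₂) (hb₂0 : 0 < b₂)
    (hab : b₁ ^ (1 / a₁) ≤ b₂ ^ (1 / a₂)) (π : ℝ → ℝ) (hπ : IsKFun π) :
    ∃ π' : ℝ → ℝ, IsKFun π' ∧ ∀ s ≥ (0 : ℝ), ∀ t ≥ (0 : ℝ),
      c₁ * (3 * (π s / (c₂ * b₂ ^ t)) ^ (1 / a₂)) ^ a₁ * b₁ ^ t ≤ π' s := by
  refine ⟨fun s => c₁ * 3 ^ a₁ * (π s / c₂) ^ (a₁ / a₂),
    ((hπ.div_const hc₂).rpow (div_pos ha₁ ha₂)).const_mul (by positivity), fun s hs t ht => ?_⟩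
  have hb₂t : 0 < b₂ ^ t := Real.rpow_pos_of_pos hb₂0 t
  rw [mul_rpow_div_mul_rpow_eq hc₂ (hπ.nonneg hs) hb₂t]
  have hπs : 0 ≤ π s / c₂ := div_nonneg (hπ.nonneg hs) hc₂.le
  refine mul_le_of_le_one_right (by positivity) ((div_le_one (by positivity)).mpr ?_)
  exact rpow_le_rpow_rpow_of_rpow_inv_le hb₁0.le hb₂0.le ha₁ ha₂ hab ht

/-- exponential-form key stability condition. With
`β(s,t) = c₁ s^{a₁} b₁^t` and `ρ̲(s,t) = c₂ s^{a₂} b₂^t`, `0 < b₁, b₂ < 1`,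
if `b₂^{1/a₂} ≥ b₁^{1/a₁}` then for every K-function `π` there is a K-function `π'`
with `c₁ (3 (π(s)/(c₂ b₂^t))^{1/a₂})^{a₁} b₁^t ≤ π'(s)` for all `s ≥ 0`, `t ≥ 0`. -/
theorem exponential_key_stability (c₁ a₁ b₁ c₂ a₂ b₂ : ℝ)
    (hc₁ : 0 < c₁) (ha₁ : 0 < a₁) (hb₁0 : 0 < b₁) (hb₁1 : b₁ < 1)
    (hc₂ : 0 < c₂) (ha₂ : 0 < a₂) (hb₂0 : 0 < b₂) (hb₂1 : b₂ < 1)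
    (hab : b₁ ^ (1 / a₁) ≤ b₂ ^ (1 / a₂)) (π : ℝ → ℝ) (hπ : IsKFun π) :
    ∃ π' : ℝ → ℝ, IsKFun π' ∧ ∀ s ≥ (0 : ℝ), ∀ t ≥ (0 : ℝ),
      c₁ * (3 * (π s / (c₂ * b₂ ^ t)) ^ (1 / a₂)) ^ a₁ * b₁ ^ t ≤ π' s :=
  exponential_key_stability_general c₁ a₁ b₁ c₂ a₂ b₂ hc₁ ha₁ hb₁0 hc₂ ha₂ hb₂0 hab π hπ
end

section
/- Let x₁⁽¹⁾, x₁⁽²⁾ : ℝ≥0 → ℝ be two nonnegative differentiable functions satisfying ẋ₁⁽ⁱ⁾ = -2k·(x₁⁽ⁱ⁾)² + w⁽ⁱ⁾ with k > 0, and suppose x₁⁽¹⁾(t) + x₁⁽²⁾(t) ≥ c₀ > 0 for all t. Then |x₁⁽¹⁾(t) - x₁⁽²⁾(t)| ≤ |x₁⁽¹⁾(0) - x₁⁽²⁾(0)|·e^{-2k·c₀·t} + (1/(2k·c₀))·sup_{0≤τ≤t}|w⁽¹⁾(τ) - w⁽²⁾(τ)| for all t ≥ 0. -/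
/-!
The difference `d = x₁ - x₂` solves the linear equation `d' = -2k(x₁ + x₂) d + δw`, whose
rate `2k(x₁ + x₂)` is at least `c := 2kc₀`. Away from zeros of `d`, the factor `sign d` turns the
rate term into `-2k(x₁ + x₂)|d| ≤ -c|d|`; at a zero of `d` the right Dini derivative of `|d|` is
`|δw|`. Hence `|d|` satisfies the Grönwall hypothesis `D⁺|d| ≤ -c|d| + sup|δw|`, and Grönwall's
bound with the negative constant `-c` is at most `|d 0| e^{-ct} + sup|δw| / c`.
-/

open Set Filter Topology

theorem sign_mul_le_abs {α : Type*} [Ring α] [LinearOrder α] [IsStrictOrderedRing α] (x v : α) :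
    (SignType.sign x : α) * v ≤ |v| := by
  rcases lt_trichotomy x 0 with h | rfl | h
  · simpa [sign_neg h] using neg_le_abs v
  · simp
  · simpa [sign_pos h] using le_abs_self v

theorem frequently_slope_abs_lt_of_hasDerivAt {f : ℝ → ℝ} {a v x r : ℝ}
    (hf : HasDerivAt f (-a * f x + v) x) (hr : -a * |f x| + |v| < r) :
    ∃ᶠ z in 𝓝[>] x, (z - x)⁻¹ * (|f z| - |f x|) < r := by
  rcases eq_or_ne (f x) 0 with h₀ | h₀
  · rw [h₀, mul_zero, zero_add] at hf
    rw [h₀, abs_zero, mul_zero, zero_add] at hr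
    simpa only [Real.norm_eq_abs, h₀] using hf.hasDerivWithinAt.liminf_right_slope_norm_le hr
  · have hlt : SignType.sign (f x) * (-a * f x + v) < r :=
      calc _ = -a * |f x| + SignType.sign (f x) * v := by rw [← sign_mul_self]; ring
        _ ≤ -a * |f x| + |v| := by gcongr; exact sign_mul_le_abs _ _
        _ < r := hr
    simpa [slope] using ((hasDerivAt_abs h₀).comp x hf).hasDerivWithinAt.liminf_right_slope_le hlt

theorem gronwallBound_neg_le {δ c ε : ℝ} (hc : 0 < c) (hε : 0 ≤ ε) (x : ℝ) :
    gronwallBound δ (-c) ε x ≤ δ * Real.exp (-c * x) + ε / c := by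
  have hsplit : ε / -c * (Real.exp (-c * x) - 1) = ε / c - ε / c * Real.exp (-c * x) := by
    rw [div_neg]; ring
  simp only [gronwallBound_of_K_ne_0 (neg_ne_zero.mpr hc.ne'), hsplit]
  have : 0 ≤ ε / c * Real.exp (-c * x) := by positivity
  linarith

theorem abs_le_of_hasDerivAt_eq_neg_mul_add {f a v : ℝ → ℝ} {c W t₀ t : ℝ} (hc : 0 < c)
    (ht : t₀ ≤ t) (hf : ∀ τ ∈ Icc t₀ t, HasDerivAt f (-a τ * f τ + v τ) τ)
    (ha : ∀ τ ∈ Icc t₀ t, c ≤ a τ) (hv : ∀ τ ∈ Icc t₀ t, |v τ| ≤ W) :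
    |f t| ≤ |f t₀| * Real.exp (-c * (t - t₀)) + W / c := by
  have hcont : ContinuousOn (fun τ => |f τ|) (Icc t₀ t) :=
    fun τ hτ => (hf τ hτ).continuousAt.continuousWithinAt.abs
  have hW : 0 ≤ W := (abs_nonneg _).trans (hv t₀ ⟨le_rfl, ht⟩)
  refine (le_gronwallBound_of_liminf_deriv_right_le (f' := fun τ => -a τ * |f τ| + W) hcont
    (fun τ hτ r hr => frequently_slope_abs_lt_of_hasDerivAt (hf τ (Ico_subset_Icc_self hτ)) ?_)
    le_rfl (fun τ hτ => ?_) t ⟨ht, le_rfl⟩).trans (gronwallBound_neg_le hc hW _)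
  · have := hv τ (Ico_subset_Icc_self hτ)
    linarith
  · have := mul_le_mul_of_nonneg_right (ha τ (Ico_subset_Icc_self hτ)) (abs_nonneg (f τ))
    show -a τ * |f τ| + W ≤ -c * |f τ| + W
    linarith

theorem reactor_first_state_contraction_general (k c₀ : ℝ) (hk : 0 < k) (hc₀ : 0 < c₀)
    (x₁ x₂ w₁ w₂ : ℝ → ℝ)
    (hx₁ : ∀ t ≥ (0 : ℝ), HasDerivAt x₁ (-2 * k * (x₁ t) ^ 2 + w₁ t) t)
    (hx₂ : ∀ t ≥ (0 : ℝ), HasDerivAt x₂ (-2 * k * (x₂ t) ^ 2 + w₂ t) t)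
    (hsum : ∀ t ≥ (0 : ℝ), c₀ ≤ x₁ t + x₂ t) :
    ∀ t ≥ (0 : ℝ), ∀ Wb : ℝ, (∀ τ ∈ Set.Icc 0 t, |w₁ τ - w₂ τ| ≤ Wb) →
      |x₁ t - x₂ t| ≤
        |x₁ 0 - x₂ 0| * Real.exp (-2 * k * c₀ * t) + Wb / (2 * k * c₀) := by
  intro t ht Wb hWb
  have hdiff : ∀ τ ∈ Icc 0 t, HasDerivAt (fun s => x₁ s - x₂ s)
      (-(2 * k * (x₁ τ + x₂ τ)) * (x₁ τ - x₂ τ) + (w₁ τ - w₂ τ)) τ := fun τ hτ =>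
    ((hx₁ τ hτ.1).sub (hx₂ τ hτ.1)).congr_deriv (by ring)
  have hrate : ∀ τ ∈ Icc 0 t, 2 * k * c₀ ≤ 2 * k * (x₁ τ + x₂ τ) := fun τ hτ => by
    gcongr
    exact hsum τ hτ.1
  convert abs_le_of_hasDerivAt_eq_neg_mul_add (by positivity) ht hdiff hrate hWb using 4
  ring

/-- incremental contraction for the reactor's first state:
if `ẋ₁⁽ⁱ⁾ = -2k (x₁⁽ⁱ⁾)² + w⁽ⁱ⁾` with `k > 0`, both solutions nonnegative and
`x₁⁽¹⁾(t) + x₁⁽²⁾(t) ≥ c₀ > 0`, then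
`|x₁⁽¹⁾(t) - x₁⁽²⁾(t)| ≤ |x₁⁽¹⁾(0) - x₁⁽²⁾(0)| e^{-2kc₀t} + (1/(2kc₀)) sup_{[0,t]}|δw|`. -/
theorem reactor_first_state_contraction (k c₀ : ℝ) (hk : 0 < k) (hc₀ : 0 < c₀)
    (x₁ x₂ w₁ w₂ : ℝ → ℝ)
    (hx₁nn : ∀ t ≥ (0 : ℝ), 0 ≤ x₁ t) (hx₂nn : ∀ t ≥ (0 : ℝ), 0 ≤ x₂ t)
    (hx₁ : ∀ t ≥ (0 : ℝ), HasDerivAt x₁ (-2 * k * (x₁ t) ^ 2 + w₁ t) t)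
    (hx₂ : ∀ t ≥ (0 : ℝ), HasDerivAt x₂ (-2 * k * (x₂ t) ^ 2 + w₂ t) t)
    (hsum : ∀ t ≥ (0 : ℝ), c₀ ≤ x₁ t + x₂ t) :
    ∀ t ≥ (0 : ℝ), ∀ Wb : ℝ, (∀ τ ∈ Set.Icc 0 t, |w₁ τ - w₂ τ| ≤ Wb) →
      |x₁ t - x₂ t| ≤
        |x₁ 0 - x₂ 0| * Real.exp (-2 * k * c₀ * t) + Wb / (2 * k * c₀) :=
  reactor_first_state_contraction_general k c₀ hk hc₀ x₁ x₂ w₁ w₂ hx₁ hx₂ hsum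
end

section
/- Let β_x be a KL-function of the form β_x(s,t) ≤ μ(s)·φ(t) with μ a K-function and φ an L-function, let α_w, α_v be K-functions, and fix η ∈ (0,1), M₀, M_w, M_v ≥ 0. Set s̄ = β_x(M₀,0) + (α_w(M_w)+α_v(M_v))/(1-η), and suppose T satisfies μ(s)·φ(T) ≤ η·s for all s ∈ [0, s̄]. Suppose a sequence of error bounds satisfies: e₀ ≤ β_x(M₀,0) + D where D := α_w(M_w)+α_v(M_v), and e_{k+1} ≤ μ(e_k)·φ(T) + D whenever e_k ≤ s̄. Then e_k ≤ η^k·e₀ + D/(1-η) ≤ s̄ for all k ≥ 0, and e_k converges to a value at most D/(1-η). -/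
open Set Filter

/-!
With `c := D / (1 - η)` the fixed point of `x ↦ η x + D`, the contraction hypothesis turns the
recursion into `e (k+1) - c ≤ η (e k - c)` as long as `e k ≤ s̄`. The candidate bound
`c + η ^ k (e 0 - c)` never exceeds `s̄`, because `e 0 - c ≤ β_x(M₀,0) + D - c ≤ β_x(M₀,0)`, so
an induction keeps every `e k` inside the region where the recursion applies. The bound tends to
`c`, which controls the `limsup`.
-/

theorem IsKFun.nonneg_s13 {f : ℝ → ℝ} (hf : IsKFun f) {x : ℝ} (hx : 0 ≤ x) : 0 ≤ f x :=
  hf.2.1 ▸ hf.2.2.monotoneOn (Set.mem_Ici.2 le_rfl) hx hx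

theorem pow_mul_le_of_le {R : Type*} [Semiring R] [PartialOrder R] [IsOrderedRing R] {η x b : R}
    (hη₀ : 0 ≤ η) (hη₁ : η ≤ 1) (hx : x ≤ b) (hb : 0 ≤ b) (k : ℕ) : η ^ k * x ≤ b :=
  calc η ^ k * x ≤ η ^ k * b := mul_le_mul_of_nonneg_left hx (pow_nonneg hη₀ k)
    _ ≤ b := mul_le_of_le_one_left hb (pow_le_one₀ hη₀ hη₁)

theorem le_add_pow_mul_sub_of_le_mul_add {R : Type*} [CommRing R] [PartialOrder R]
    [IsOrderedRing R] {e : ℕ → R} {η D c s : R} (hη : 0 ≤ η)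
    (hc : η * c + D = c) (hs : ∀ k, c + η ^ k * (e 0 - c) ≤ s)
    (hstep : ∀ k, e k ≤ s → e (k + 1) ≤ η * e k + D) (k : ℕ) :
    e k ≤ c + η ^ k * (e 0 - c) := by
  induction k with
  | zero => simp
  | succ k ih =>
    calc e (k + 1) ≤ η * e k + D := hstep k (ih.trans (hs k))
      _ ≤ η * (c + η ^ k * (e 0 - c)) + D := by gcongr
      _ = c + η ^ (k + 1) * (e 0 - c) := by rw [pow_succ]; linear_combination hc

theorem limsup_le_of_le_of_tendsto {e u : ℕ → ℝ} {a c : ℝ} (ha : ∀ k, a ≤ e k)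
    (heu : ∀ k, e k ≤ u k) (hu : Tendsto u atTop (nhds c)) : limsup e atTop ≤ c :=
  calc limsup e atTop ≤ limsup u atTop :=
        limsup_le_limsup (Eventually.of_forall heu) (isCoboundedUnder_le_of_le atTop ha)
          hu.isBoundedUnder_le
    _ = c := hu.limsup_eq

theorem fie_to_mhe_error_recursion_general (μ φ : ℝ → ℝ)
    (βx : ℝ → ℝ → ℝ) (hβx : IsKLFun βx)
    (αw αv : ℝ → ℝ) (hαw : IsKFun αw) (hαv : IsKFun αv)
    (η M₀ Mw Mv D sbar T : ℝ) (hη : η ∈ Set.Ioo (0 : ℝ) 1)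
    (hM₀ : 0 ≤ M₀) (hMw : 0 ≤ Mw) (hMv : 0 ≤ Mv)
    (hD : D = αw Mw + αv Mv) (hsbar : sbar = βx M₀ 0 + D / (1 - η))
    (hTcontr : ∀ s ∈ Set.Icc 0 sbar, μ s * φ T ≤ η * s)
    (e : ℕ → ℝ) (he : ∀ k, 0 ≤ e k) (he0 : e 0 ≤ βx M₀ 0 + D)
    (hrec : ∀ k, e k ≤ sbar → e (k + 1) ≤ μ (e k) * φ T + D) :
    (∀ k, e k ≤ η ^ k * e 0 + D / (1 - η) ∧ e k ≤ sbar) ∧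
      Filter.limsup e Filter.atTop ≤ D / (1 - η) := by
  obtain ⟨hη₀, hη₁⟩ := hη
  set c := D / (1 - η) with hc_def
  have hD₀ : 0 ≤ D := hD ▸ add_nonneg (hαw.nonneg_s13 hMw) (hαv.nonneg_s13 hMv)
  have hβ₀ : 0 ≤ βx M₀ 0 := (hβx.1 0 le_rfl).nonneg_s13 hM₀
  have hc₀ : 0 ≤ c := div_nonneg hD₀ (by linarith)
  have hfix : η * c + D = c := by rw [hc_def]; field_simp [(by linarith : (1 - η) ≠ 0)]; ring
  have hbound (k : ℕ) : c + η ^ k * (e 0 - c) ≤ sbar := by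
    have := pow_mul_le_of_le hη₀.le hη₁.le
      (by linarith [mul_nonneg hη₀.le hc₀] : e 0 - c ≤ βx M₀ 0) hβ₀ k
    linarith
  have hek := le_add_pow_mul_sub_of_le_mul_add hη₀.le hfix hbound fun k hk =>
    (hrec k hk).trans (by linarith [hTcontr (e k) ⟨he k, hk⟩])
  have hlim : Tendsto (fun k => c + η ^ k * (e 0 - c)) atTop (nhds c) := by
    simpa using
      ((tendsto_pow_atTop_nhds_zero_of_lt_one hη₀.le hη₁).mul_const (e 0 - c)).const_add c
  refine ⟨fun k => ⟨(hek k).trans ?_, (hek k).trans (hbound k)⟩,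
    limsup_le_of_le_of_tendsto he hek hlim⟩
  linarith [mul_nonneg (pow_nonneg hη₀.le k) hc₀]

/-- induction step of the FIE-to-MHE stability link: with
`s̄ = β_x(M₀,0) + (α_w(M_w)+α_v(M_v))/(1-η)` and horizon `T` such that
`μ(s)·φ(T) ≤ η·s` on `[0,s̄]`, the windowed error bounds satisfy
`e_k ≤ η^k e₀ + D/(1-η) ≤ s̄` for all `k`, and `limsup e_k ≤ D/(1-η)`. -/
theorem fie_to_mhe_error_recursion (μ φ : ℝ → ℝ) (hμ : IsKFun μ) (hφ : IsLFun φ)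
    (βx : ℝ → ℝ → ℝ) (hβx : IsKLFun βx)
    (hβμφ : ∀ s ≥ (0 : ℝ), ∀ t ≥ (0 : ℝ), βx s t ≤ μ s * φ t)
    (αw αv : ℝ → ℝ) (hαw : IsKFun αw) (hαv : IsKFun αv)
    (η M₀ Mw Mv D sbar T : ℝ) (hη : η ∈ Set.Ioo (0 : ℝ) 1)
    (hM₀ : 0 ≤ M₀) (hMw : 0 ≤ Mw) (hMv : 0 ≤ Mv) (hT : 0 ≤ T)
    (hD : D = αw Mw + αv Mv) (hsbar : sbar = βx M₀ 0 + D / (1 - η))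
    (hTcontr : ∀ s ∈ Set.Icc 0 sbar, μ s * φ T ≤ η * s)
    (e : ℕ → ℝ) (he : ∀ k, 0 ≤ e k) (he0 : e 0 ≤ βx M₀ 0 + D)
    (hrec : ∀ k, e k ≤ sbar → e (k + 1) ≤ μ (e k) * φ T + D) :
    (∀ k, e k ≤ η ^ k * e 0 + D / (1 - η) ∧ e k ≤ sbar) ∧
      Filter.limsup e Filter.atTop ≤ D / (1 - η) :=
  fie_to_mhe_error_recursion_general μ φ βx hβx αw αv hαw hαv η M₀ Mw Mv D sbar T hη hM₀ hMw hMv hD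
    hsbar hTcontr e he he0 hrec
end
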